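/- (Type C straightening.) Let e_k be the k-th elementary symmetric polynomial in x₁,…,x_n,x₁^{-1},…,x_n^{-1} (e_k = 0 for k ∉ {0,…,2n}), and for β ∈ ℤ^m set v_β = det( e_{β_i - (i+j)} - e_{β_i - (i-j)} )_{1≤i,j≤m}. Define δ = (-n-1, -n-2, …, -n-m) ∈ ℤ^m and the dot action of the hyperoctahedral group W = (ℤ/2)^m ⋊ S_m on ℤ^m by w ∘ β = w(β + δ) - δ, where S_m permutes coordinates and sign changes negate coordinates. Then v_{w ∘ β} = ε(w)·v_β for all w ∈ W and β ∈ ℤ^m. -/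
import Mathlib


/- STATEMENT 9 (Type C straightening): for the type C Jacobi–Trudi determinant
v_β = det(e_{β_i-(i+j)} - e_{β_i-(i-j)}) (e_k elementary symmetric in
x₁^{±1},…,x_n^{±1}) and the dot action w ∘ β = w(β+δ) - δ of the hyperoctahedral
group W = (ℤ/2)^m ⋊ S_m (δ = (-n-1,…,-n-m)), one has v_{w∘β} = ε(w)·v_β. -/

open scoped Classical

abbrev Lau (n : ℕ) := AddMonoidAlgebra ℤ (Fin n → ℤ)

noncomputable def mono {n : ℕ} (β : Fin n → ℤ) : Lau n := AddMonoidAlgebra.single β 1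

noncomputable def xv (n : ℕ) : Fin n ⊕ Fin n → Lau n
  | Sum.inl i => mono (Pi.single i (1 : ℤ))
  | Sum.inr i => mono (Pi.single i (-1 : ℤ))

/-- `e_k` in the 2n variables x₁,…,x_n,x₁^{-1},…,x_n^{-1}. -/
noncomputable def eC (n : ℕ) (k : ℤ) : Lau n :=
  if 0 ≤ k then
    ∑ S ∈ (Finset.univ : Finset (Fin n ⊕ Fin n)).powersetCard k.toNat, ∏ a ∈ S, xv n a
  else 0

/-- The type C Jacobi–Trudi determinant `v_β = det(e_{β_i-(i+j)} - e_{β_i-(i-j)})`. -/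
noncomputable def vC (n m : ℕ) (β : Fin m → ℤ) : Lau n :=
  Matrix.det (Matrix.of fun i j : Fin m =>
    eC n (β i - (((i : ℤ) + 1) + ((j : ℤ) + 1))) - eC n (β i - (((i : ℤ) + 1) - ((j : ℤ) + 1))))

/-- A signed permutation (σ, s) acting on ℤ^m: `(w·x)_i = ±x_{σ⁻¹(i)}`. -/
def act {m : ℕ} (σ : Equiv.Perm (Fin m)) (s : Fin m → Bool) (x : Fin m → ℤ) : Fin m → ℤ :=
  fun i => (if s i then -1 else 1) * x (σ⁻¹ i)

/-- The sign ε(w) of the signed permutation w = (σ, s). -/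
noncomputable def sgn {m : ℕ} (σ : Equiv.Perm (Fin m)) (s : Fin m → Bool) : ℤ :=
  (Equiv.Perm.sign σ : ℤ) * ∏ i, (if s i then (-1 : ℤ) else 1)

/-- δ = (-n-1, -n-2, …, -n-m). -/
def deltaC (n m : ℕ) (i : Fin m) : ℤ := -(n : ℤ) - 1 - i

/-- The dot action `w ∘ β = w(β + δ) - δ` of the hyperoctahedral group. -/
def dotC (n m : ℕ) (σ : Equiv.Perm (Fin m)) (s : Fin m → Bool) (β : Fin m → ℤ) : Fin m → ℤ :=
  fun i => act σ s (fun t => β t + deltaC n m t) i - deltaC n m i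

section Aux

variable (n : ℕ)

def wt (n : ℕ) : Fin n ⊕ Fin n → (Fin n → ℤ)
  | Sum.inl i => Pi.single i 1
  | Sum.inr i => Pi.single i (-1)

lemma xv_eq (a : Fin n ⊕ Fin n) : xv n a = mono (wt n a) := by cases a <;> rfl

lemma mono_mul (a b : Fin n → ℤ) : mono a * mono b = mono (a + b) := by
  simp [mono, AddMonoidAlgebra.single_mul_single]

lemma prod_xv (S : Finset (Fin n ⊕ Fin n)) :
    ∏ a ∈ S, xv n a = mono (∑ a ∈ S, wt n a) := by
  induction S using Finset.cons_induction with
  | empty => simp [mono, AddMonoidAlgebra.one_def]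
  | cons a S ha ih =>
    rw [Finset.prod_cons, Finset.sum_cons, ih, xv_eq, mono_mul]

lemma sum_wt_univ : ∑ a, wt n a = 0 := by
  rw [Fintype.sum_sum_type, ← Finset.sum_add_distrib]
  apply Finset.sum_eq_zero
  intro i _
  funext x
  simp only [wt, Pi.add_apply, Pi.single_apply, Pi.zero_apply]
  split <;> norm_num

lemma wt_swap (a : Fin n ⊕ Fin n) :
    wt n (Equiv.sumComm (Fin n) (Fin n) a) = - wt n a := by
  cases a <;>
  · funext x
    simp only [wt, Equiv.sumComm_apply, Sum.swap_inl, Sum.swap_inr, Pi.neg_apply,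
      Pi.single_apply]
    split <;> norm_num

lemma map_map_self (S : Finset (Fin n ⊕ Fin n)) :
    (S.map (Equiv.sumComm (Fin n) (Fin n)).toEmbedding).map
      (Equiv.sumComm (Fin n) (Fin n)).toEmbedding = S := by
  rw [Finset.map_map]
  have h : (Equiv.sumComm (Fin n) (Fin n)).toEmbedding.trans
      (Equiv.sumComm (Fin n) (Fin n)).toEmbedding = Function.Embedding.refl _ := by
    ext a; cases a <;> simp
  rw [h, Finset.map_refl]

lemma eC_symm (k : ℤ) : eC n k = eC n (2 * n - k) := by
  have hcard : (Finset.univ : Finset (Fin n ⊕ Fin n)).card = n + n := by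
    simp [Finset.card_univ]
  rcases lt_or_ge k 0 with hk | hk
  · rw [eC, if_neg (not_le.mpr hk), eC, if_pos (by omega)]
    rw [Finset.powersetCard_eq_empty.mpr (by rw [hcard]; omega)]
    simp
  · rcases le_or_gt k (2 * n) with hk2 | hk2
    · rw [eC, if_pos hk, eC, if_pos (by omega)]
      set e := Equiv.sumComm (Fin n) (Fin n) with he
      refine Finset.sum_nbij' (i := fun S => (S.map e.toEmbedding)ᶜ)
        (j := fun T => (Tᶜ).map e.toEmbedding) ?_ ?_ ?_ ?_ ?_
      · intro S hS
        rw [Finset.mem_powersetCard_univ] at hS ⊢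
        rw [Finset.card_compl, Finset.card_map, hS, Fintype.card_sum, Fintype.card_fin]
        omega
      · intro T hT
        rw [Finset.mem_powersetCard_univ] at hT ⊢
        rw [Finset.card_map, Finset.card_compl, hT, Fintype.card_sum, Fintype.card_fin]
        omega
      · intro S _
        show ((S.map e.toEmbedding)ᶜᶜ).map e.toEmbedding = S
        rw [compl_compl, map_map_self]
      · intro T _
        show (((Tᶜ).map e.toEmbedding).map e.toEmbedding)ᶜ = T
        rw [map_map_self, compl_compl]
      · intro S hS
        rw [prod_xv, prod_xv]
        congr 1
        have h1 : ∑ a ∈ (S.map e.toEmbedding)ᶜ, wt n a + ∑ a ∈ S.map e.toEmbedding, wt n a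
            = ∑ a, wt n a := Finset.sum_compl_add_sum _ _
        rw [sum_wt_univ, Finset.sum_map] at h1
        simp only [Equiv.coe_toEmbedding] at h1
        have h2 : ∑ a ∈ S, wt n (e a) = - ∑ a ∈ S, wt n a := by
          rw [← Finset.sum_neg_distrib]
          exact Finset.sum_congr rfl fun a _ => wt_swap n a
        rw [h2] at h1
        exact (add_neg_eq_zero.mp h1).symm
    · rw [eC, if_pos hk, eC, if_neg (by omega)]
      rw [Finset.powersetCard_eq_empty.mpr (by rw [hcard]; omega)]
      simp

lemma entry_neg (c t : ℤ) :
    eC n (-c + n - t) - eC n (-c + n + t) = -(eC n (c + n - t) - eC n (c + n + t)) := by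
  have h1 : eC n (-c + (n : ℤ) - t) = eC n (c + n + t) := by
    rw [eC_symm n (-c + (n : ℤ) - t)]; congr 1; ring
  have h2 : eC n (-c + (n : ℤ) + t) = eC n (c + n - t) := by
    rw [eC_symm n (-c + (n : ℤ) + t)]; congr 1; ring
  rw [h1, h2]; ring

end Aux

theorem stmt9 (n m : ℕ) (hn : 1 ≤ n) (hm : 1 ≤ m) (β : Fin m → ℤ)
    (σ : Equiv.Perm (Fin m)) (s : Fin m → Bool) :
    vC n m (dotC n m σ s β) = sgn σ s • vC n m β := by
  classical
  set M : Matrix (Fin m) (Fin m) (Lau n) := Matrix.of fun i j : Fin m =>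
    eC n (β i - (((i : ℤ) + 1) + ((j : ℤ) + 1))) -
      eC n (β i - (((i : ℤ) + 1) - ((j : ℤ) + 1))) with hM
  set d : Fin m → Lau n := fun i => (((if s i then (-1 : ℤ) else 1) : ℤ) : Lau n) with hdd
  have key : (Matrix.of fun i j : Fin m =>
      eC n (dotC n m σ s β i - (((i : ℤ) + 1) + ((j : ℤ) + 1))) -
        eC n (dotC n m σ s β i - (((i : ℤ) + 1) - ((j : ℤ) + 1)))) =
      Matrix.diagonal d * M.submatrix σ.symm id := by
    refine Matrix.ext fun i j => ?_
    rw [Matrix.diagonal_mul, Matrix.submatrix_apply, Matrix.of_apply, id_eq]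
    set c : ℤ := β (σ.symm i) + deltaC n m (σ.symm i) with hc
    have hM1 : M (σ.symm i) j = eC n (c + n - ((j : ℤ) + 1)) - eC n (c + n + ((j : ℤ) + 1)) := by
      rw [hM, Matrix.of_apply]
      congr 2 <;> · simp only [hc, deltaC]; ring
    cases hsi : s i with
    | false =>
      have hdot : dotC n m σ s β i = c - deltaC n m i := by
        simp [dotC, act, hsi, hc, Equiv.Perm.inv_def]
      have a1 : c - deltaC n m i - (((i : ℤ) + 1) + ((j : ℤ) + 1))
          = c + n - ((j : ℤ) + 1) := by simp only [deltaC]; ring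
      have a2 : c - deltaC n m i - (((i : ℤ) + 1) - ((j : ℤ) + 1))
          = c + n + ((j : ℤ) + 1) := by simp only [deltaC]; ring
      rw [hdot, a1, a2, hM1, hdd]
      simp [hsi]
    | true =>
      have hdot : dotC n m σ s β i = -c - deltaC n m i := by
        simp [dotC, act, hsi, hc, Equiv.Perm.inv_def]
      have a1 : -c - deltaC n m i - (((i : ℤ) + 1) + ((j : ℤ) + 1))
          = -c + n - ((j : ℤ) + 1) := by simp only [deltaC]; ring
      have a2 : -c - deltaC n m i - (((i : ℤ) + 1) - ((j : ℤ) + 1))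
          = -c + n + ((j : ℤ) + 1) := by simp only [deltaC]; ring
      rw [hdot, a1, a2, entry_neg n c ((j : ℤ) + 1), hM1, hdd]
      simp [hsi]
  have hv : vC n m (dotC n m σ s β)
      = Matrix.det (Matrix.diagonal d * M.submatrix σ.symm id) := by
    rw [vC, key]
  have hvb : vC n m β = M.det := rfl
  rw [hv, Matrix.det_mul, Matrix.det_diagonal, hvb, sgn,
    show σ.symm = σ⁻¹ from rfl, Matrix.det_permute, Equiv.Perm.sign_inv, zsmul_eq_mul]
  simp only [hdd]
  push_cast [apply_ite (Int.cast : ℤ → Lau n)]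
  ring
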